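/- Let X = ∂/∂t + Σ_i f_i^A ∂/∂q_i^A + Σ_j F_j^A ∂/∂q_j^A + Σ_i G_A^i ∂/∂p_A^i be a vector field on W_r with dt-component 1, and let Ω_r = Σ dq_i^A ∧ dp_A^i + d(Σ p_A^i q_{i+1}^A − L̂) ∧ dt. Then i(X)Ω_r = 0 holds at a point iff at that point: (a) p_A^{k-1} = ∂L̂/∂q_k^A; (b) f_i^A = q_{i+1}^A for 0 ≤ i ≤ k-1; (c) G_A^0 = ∂L̂/∂q_0^A; and (d) G_A^i = ∂L̂/∂q_i^A − p_A^{i-1} for 1 ≤ i ≤ k-1. -/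

import Mathlib

/-! **Coefficient analysis of the unified dynamical equation `i(X)Ω_r = 0`.**

On `W_r ≅ ℝ × (ℝ^n)^{2k} × (ℝ^n)^k` with coordinates
`(t, q_0, …, q_{2k-1}, p^0, …, p^{k-1})` and with
`Ω_r = Σ dq_i^A ∧ dp_A^i + dF ∧ dt`, `F = Σ p_A^i q_{i+1}^A − L̂`
(`L̂ = L̂(t, q_0, …, q_k)` smooth), a vector field
`X = ∂/∂t + f_i^A ∂/∂q_i^A + F_j^A ∂/∂q_j^A + G_A^i ∂/∂p_A^i` with
`dt`-component `1` (its `q`-components collected into `fq`, its `p`-components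
into `G`) satisfies `i(X)Ω_r = 0` at a point `w` iff:
(a) `p_A^{k-1} = ∂L̂/∂q_k^A` (a constraint on `w`, defining `W_1`);
(b) `fq_i^A = q_{i+1}^A` for `0 ≤ i ≤ k-1`;
(c) `G_A^0 = ∂L̂/∂q_0^A`;
(d) `G_A^i = ∂L̂/∂q_i^A − p_A^{i-1}` for `1 ≤ i ≤ k-1`. -/

variable (n k : ℕ)

abbrev Jet (n k : ℕ) := ℝ × (Fin (2 * k) → Fin n → ℝ)

abbrev Wr (n k : ℕ) := ℝ × (Fin (2 * k) → Fin n → ℝ) × (Fin k → Fin n → ℝ)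

/-- The partial derivative `∂L̂/∂q_j^A`. -/
noncomputable def pd (Lhat : Jet n k → ℝ) (j : Fin (2 * k)) (A : Fin n)
    (x : Jet n k) : ℝ :=
  fderiv ℝ Lhat x ((0 : ℝ), Pi.single j (Pi.single A (1 : ℝ)))

/-- `F = Σ_i p_A^i q_{i+1}^A − L̂`. -/
noncomputable def Ffun (hk : 1 ≤ k) (Lhat : Jet n k → ℝ) (w : Wr n k) : ℝ :=
  (∑ i : Fin k, ∑ A : Fin n,
      w.2.2 i A * w.2.1 ⟨i.1 + 1, by have := i.isLt; omega⟩ A) -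
    Lhat (w.1, w.2.1)

/-- `Ω_r = Σ dq_i^A ∧ dp_A^i + dF ∧ dt` evaluated on two tangent vectors. -/
noncomputable def OmegaR (hk : 1 ≤ k) (Lhat : Jet n k → ℝ)
    (w u v : Wr n k) : ℝ :=
  (∑ i : Fin k, ∑ A : Fin n,
      (u.2.1 ⟨i.1, by have := i.isLt; omega⟩ A * v.2.2 i A -
       v.2.1 ⟨i.1, by have := i.isLt; omega⟩ A * u.2.2 i A)) +
    (fderiv ℝ (Ffun n k hk Lhat) w u * v.1 -
     fderiv ℝ (Ffun n k hk Lhat) w v * u.1)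

/-! Since `Ω_r` is alternating, `i(X)Ω_r` vanishes on `X` itself, and `X` has `dt`-component `1`;
so it suffices to test `i(X)Ω_r` on vertical vectors `(0, v_q, v_p)`, and the `dt`-coefficient
(the energy equation) never has to be computed. On vertical vectors `i(X)Ω_r` is the linear form
`Σ_j v_q^j · c_j + Σ_i v_p^i · d_i` with `d_i = f_i - q_{i+1}` and
`c_j = ∂L̂/∂q_j - G_j - p^{j-1}` (a term is absent when its index is out of range). It vanishes
identically iff all coefficients do: `d = 0` is (b), and `c_j = 0` is (c) for `j = 0`, (d) for
`0 < j < k`, the constraint (a) for `j = k`, and automatic for `j > k` since `L̂` does not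
depend on `q_j` there. -/

section

variable {n k : ℕ} {ι κ m R : Type*} [Fintype ι] [Fintype κ] [Fintype m]

open Function

theorem Function.Injective.sum_dotProduct_extend [NonUnitalNonAssocSemiring R] {e : ι → κ}
    (he : Injective e) (x : κ → m → R) (c : ι → m → R) :
    ∑ j, x j ⬝ᵥ extend e c 0 j = ∑ i, x (e i) ⬝ᵥ c i :=
  (Fintype.sum_of_injective e he _ _
    (fun j hj => by rw [extend_apply' _ _ _ hj, Pi.zero_apply, dotProduct_zero])
    (fun i => by rw [he.extend_apply])).symm

theorem forall_sum_dotProduct_eq_zero_iff [Ring R] [LinearOrder R] [IsStrictOrderedRing R]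
    (c : ι → m → R) : (∀ x : ι → m → R, ∑ i, x i ⬝ᵥ c i = 0) ↔ c = 0 := by
  refine ⟨fun h => funext fun i => dotProduct_self_eq_zero.1 ?_, by simp_all⟩
  exact congrFun ((Fintype.sum_eq_zero_iff_of_nonneg fun i =>
    Fintype.sum_nonneg fun A => mul_self_nonneg (c i A)).1 (h c)) i

theorem forall_sum_dotProduct_add_sum_dotProduct_eq_zero_iff [Ring R] [LinearOrder R]
    [IsStrictOrderedRing R] (c : ι → m → R) (d : κ → m → R) :
    (∀ (x : ι → m → R) (y : κ → m → R), ∑ i, x i ⬝ᵥ c i + ∑ j, y j ⬝ᵥ d j = 0) ↔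
      c = 0 ∧ d = 0 := by
  refine ⟨fun h => ⟨?_, ?_⟩, by rintro ⟨rfl, rfl⟩; simp⟩
  · exact (forall_sum_dotProduct_eq_zero_iff c).1 fun x => by simpa using h x 0
  · exact (forall_sum_dotProduct_eq_zero_iff d).1 fun y => by simpa using h 0 y

abbrev qSlot (i : Fin k) : Fin (2 * k) := ⟨i, by omega⟩

abbrev qSlotSucc (i : Fin k) : Fin (2 * k) := ⟨i + 1, by omega⟩

theorem qSlot_injective : Injective (qSlot (k := k)) :=
  fun _ _ h => Fin.ext (Fin.mk.inj h)

theorem qSlotSucc_injective : Injective (qSlotSucc (k := k)) :=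
  fun _ _ h => Fin.ext (Nat.succ_injective (Fin.mk.inj h))

theorem fderiv_apply_zero_prod (Lhat : Jet n k → ℝ) (x : Jet n k)
    (q : Fin (2 * k) → Fin n → ℝ) :
    fderiv ℝ Lhat x (0, q) = ∑ j, q j ⬝ᵥ fun A => pd n k Lhat j A x := by
  have hq : ((0 : ℝ), q) = ∑ j, ∑ A, q j A • ((0 : ℝ), Pi.single j (Pi.single A (1 : ℝ))) := by
    ext j A
    · simp [Prod.fst_sum]
    · simp [Prod.snd_sum, Finset.sum_apply, Pi.single_apply, ite_apply]
  rw [hq]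
  simp only [map_sum, map_smul, smul_eq_mul, pd, dotProduct]

theorem pd_eq_zero_of_lt {Lhat : Jet n k → ℝ} (hL : Differentiable ℝ Lhat)
    (hdep : ∀ (t : ℝ) (q q' : Fin (2 * k) → Fin n → ℝ),
      (∀ i : Fin (2 * k), i.1 ≤ k → q i = q' i) → Lhat (t, q) = Lhat (t, q'))
    {j : Fin (2 * k)} (hj : k < j) (A : Fin n) (x : Jet n k) :
    pd n k Lhat j A x = 0 := by
  have hconst : (fun s : ℝ => Lhat (x + s • ((0 : ℝ), Pi.single j (Pi.single A 1)))) =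
      fun _ => Lhat x := by
    funext s
    have hx : x + s • ((0 : ℝ), Pi.single j (Pi.single A 1)) =
        (x.1, x.2 + s • (Pi.single j (Pi.single A 1) : Fin (2 * k) → Fin n → ℝ)) := by
      ext <;> simp
    rw [hx]
    exact hdep _ _ _ fun i hi => by simp [Pi.single_eq_of_ne (show i ≠ j by rintro rfl; omega)]
  rw [pd, ← (hL x).lineDeriv_eq_fderiv, lineDeriv, hconst, deriv_const]

open ContinuousLinearMap in
theorem fderiv_Ffun_apply (hk : 1 ≤ k) {Lhat : Jet n k → ℝ} (hL : Differentiable ℝ Lhat)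
    (w v : Wr n k) :
    fderiv ℝ (Ffun n k hk Lhat) w v =
      ∑ i, (w.2.2 i ⬝ᵥ v.2.1 (qSlotSucc i) + w.2.1 (qSlotSucc i) ⬝ᵥ v.2.2 i)
        - fderiv ℝ Lhat (w.1, w.2.1) (v.1, v.2.1) := by
  have hq : HasFDerivAt (fun w : Wr n k => w.2.1) (fst ℝ _ _ ∘L snd ℝ ℝ _) w :=
    (hasFDerivAt_snd (𝕜 := ℝ)).fst
  have hp : HasFDerivAt (fun w : Wr n k => w.2.2) (snd ℝ _ _ ∘L snd ℝ ℝ _) w :=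
    (hasFDerivAt_snd (𝕜 := ℝ)).snd
  have hLw : HasFDerivAt (fun w : Wr n k => Lhat (w.1, w.2.1))
      (fderiv ℝ Lhat (w.1, w.2.1) ∘L (fst ℝ ℝ _).prod (fst ℝ _ _ ∘L snd ℝ ℝ _)) w :=
    (hL _).hasFDerivAt.comp w ((hasFDerivAt_fst (𝕜 := ℝ)).prodMk hq)
  have hF := (HasFDerivAt.fun_sum (u := Finset.univ) fun i _ =>
      HasFDerivAt.fun_sum (u := Finset.univ) fun A _ =>
        (hasFDerivAt_pi'.1 (hasFDerivAt_pi'.1 hp i) A).fun_mul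
          (hasFDerivAt_pi'.1 (hasFDerivAt_pi'.1 hq (qSlotSucc i)) A)).fun_sub hLw
  have hFfun : Ffun n k hk Lhat =
      fun w => ∑ i, ∑ A, w.2.2 i A * w.2.1 (qSlotSucc i) A - Lhat (w.1, w.2.1) := rfl
  rw [hFfun, hF.fderiv]
  simp only [sub_apply, sum_apply, add_apply, smul_apply, ContinuousLinearMap.comp_apply,
    ContinuousLinearMap.proj_apply, ContinuousLinearMap.coe_fst', ContinuousLinearMap.coe_snd',
    ContinuousLinearMap.prod_apply, smul_eq_mul, dotProduct, Finset.sum_add_distrib]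

theorem OmegaR_sub_smul_self (hk : 1 ≤ k) (Lhat : Jet n k → ℝ) (w u v : Wr n k) (c : ℝ) :
    OmegaR n k hk Lhat w u (v - c • u) = OmegaR n k hk Lhat w u v := by
  simp only [OmegaR, map_sub, map_smul, Prod.fst_sub, Prod.snd_sub, Prod.smul_fst, Prod.smul_snd,
    Pi.sub_apply, Pi.smul_apply, smul_eq_mul]
  congr 1
  · exact Finset.sum_congr rfl fun i _ => Finset.sum_congr rfl fun A _ => by ring
  · ring

theorem OmegaR_one_zero_eq_sum_dotProduct (hk : 1 ≤ k) {Lhat : Jet n k → ℝ}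
    (hL : Differentiable ℝ Lhat) (w : Wr n k) (fq vq : Fin (2 * k) → Fin n → ℝ)
    (G vp : Fin k → Fin n → ℝ) :
    OmegaR n k hk Lhat w (1, fq, G) (0, vq, vp) =
      ∑ j, vq j ⬝ᵥ ((fun A => pd n k Lhat j A (w.1, w.2.1)) -
        (extend qSlot G 0 j + extend qSlotSucc w.2.2 0 j)) +
      ∑ i, vp i ⬝ᵥ (fq (qSlot i) - w.2.1 (qSlotSucc i)) := by
  rw [OmegaR, fderiv_Ffun_apply hk hL, fderiv_Ffun_apply hk hL]
  simp only [fderiv_apply_zero_prod, dotProduct_sub, dotProduct_add, Finset.sum_sub_distrib,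
    Finset.sum_add_distrib, qSlotSucc_injective.sum_dotProduct_extend,
    qSlot_injective.sum_dotProduct_extend, mul_zero, mul_one]
  simp only [dotProduct, mul_comm]
  ring

theorem extend_qSlot_apply {α : Type*} [Zero α] (G : Fin k → α) (j : Fin (2 * k)) :
    extend qSlot G 0 j = if h : j.1 < k then G ⟨j, h⟩ else 0 := by
  split_ifs with h
  · exact qSlot_injective.extend_apply G 0 ⟨j, h⟩
  · exact extend_apply' _ _ _ fun ⟨i, hi⟩ => h (hi ▸ i.2)

theorem extend_qSlotSucc_apply {α : Type*} [Zero α] (p : Fin k → α) (j : Fin (2 * k)) :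
    extend qSlotSucc p 0 j = if h : j.1 ≠ 0 ∧ j.1 ≤ k then p ⟨j - 1, by omega⟩ else 0 := by
  split_ifs with h
  · have hj : j = qSlotSucc ⟨j - 1, by omega⟩ := Fin.ext (by change j.1 = j.1 - 1 + 1; omega)
    conv_lhs => rw [hj]
    exact qSlotSucc_injective.extend_apply p 0 _
  · exact extend_apply' _ _ _ fun ⟨i, hi⟩ => h (hi ▸ ⟨Nat.succ_ne_zero _, i.2⟩)

theorem pd_sub_extend_eq_zero_iff (hk : 1 ≤ k) {Lhat : Jet n k → ℝ} (hL : Differentiable ℝ Lhat)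
    (hdep : ∀ (t : ℝ) (q q' : Fin (2 * k) → Fin n → ℝ),
      (∀ i : Fin (2 * k), i.1 ≤ k → q i = q' i) → Lhat (t, q) = Lhat (t, q'))
    (x : Jet n k) (p G : Fin k → Fin n → ℝ) :
    (fun j => (fun A => pd n k Lhat j A x) - (extend qSlot G 0 j + extend qSlotSucc p 0 j)) = 0 ↔
      (∀ A, p ⟨k - 1, Nat.sub_lt hk one_pos⟩ A = pd n k Lhat ⟨k, lt_two_mul_self hk⟩ A x) ∧
      (∀ A, G ⟨0, hk⟩ A = pd n k Lhat (qSlot ⟨0, hk⟩) A x) ∧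
      (∀ (i : ℕ), 1 ≤ i → ∀ (hi : i < k) (A : Fin n),
        G ⟨i, hi⟩ A = pd n k Lhat (qSlot ⟨i, hi⟩) A x - p ⟨i - 1, Nat.sub_lt_of_lt hi⟩ A) := by
  have hk0 : 0 < k := hk
  simp only [funext_iff, Pi.add_apply, Pi.zero_apply, sub_eq_zero,
    extend_qSlot_apply, extend_qSlotSucc_apply]
  constructor
  · intro h
    refine ⟨fun A => ?_, fun A => ?_, fun i hi1 hi A => ?_⟩
    · simpa [hk0.ne'] using (h ⟨k, lt_two_mul_self hk⟩ A).symm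
    · simpa [hk0] using (h ⟨0, by omega⟩ A).symm
    · have := h ⟨i, by omega⟩ A
      simp [hi, hi.le, Nat.pos_iff_ne_zero.1 hi1] at this
      linarith
  · rintro ⟨ha, hc, hd⟩ ⟨j, hj⟩ A
    rcases Nat.lt_or_ge k j with hkj | hjk
    · simp [pd_eq_zero_of_lt hL hdep (j := ⟨j, hj⟩) hkj, hkj.not_gt, hkj.not_ge]
    rcases Nat.eq_zero_or_pos j with rfl | hj0
    · simp [hk0, hc]
    rcases hjk.eq_or_lt with rfl | hjk
    · simp [hk0.ne', ha]
    · simp [hjk, hjk.le, hj0.ne', hd j hj0 hjk]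

theorem forall_OmegaR_eq_zero_iff_of_fst_eq_one (hk : 1 ≤ k) (Lhat : Jet n k → ℝ)
    {w u : Wr n k} (hu : u.1 = 1) :
    (∀ v, OmegaR n k hk Lhat w u v = 0) ↔ ∀ vq vp, OmegaR n k hk Lhat w u (0, vq, vp) = 0 := by
  refine ⟨fun h vq vp => h _, fun h v => ?_⟩
  have hv : v - v.1 • u = (0, (v - v.1 • u).2.1, (v - v.1 • u).2.2) :=
    Prod.ext (by simp [hu]) rfl
  rw [← OmegaR_sub_smul_self hk Lhat w u v v.1, hv]
  exact h _ _

end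

/-- **Characterization of `i(X)Ω_r = 0` in coordinates.** -/
theorem iota_X_OmegaR_eq_zero_iff (hk : 1 ≤ k)
    (Lhat : Jet n k → ℝ) (hL : ContDiff ℝ (⊤ : ℕ∞) Lhat)
    (hdep : ∀ (t : ℝ) (q q' : Fin (2 * k) → Fin n → ℝ),
      (∀ i : Fin (2 * k), i.1 ≤ k → q i = q' i) → Lhat (t, q) = Lhat (t, q'))
    (w : Wr n k)
    (fq : Fin (2 * k) → Fin n → ℝ) (G : Fin k → Fin n → ℝ) :
    (∀ v : Wr n k, OmegaR n k hk Lhat w ((1 : ℝ), fq, G) v = 0) ↔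
    ((∀ A : Fin n,
        w.2.2 ⟨k - 1, by omega⟩ A = pd n k Lhat ⟨k, by omega⟩ A (w.1, w.2.1)) ∧
     (∀ (i : ℕ) (hi : i < k) (A : Fin n),
        fq ⟨i, by omega⟩ A = w.2.1 ⟨i + 1, by omega⟩ A) ∧
     (∀ A : Fin n,
        G ⟨0, by omega⟩ A = pd n k Lhat ⟨0, by omega⟩ A (w.1, w.2.1)) ∧
     (∀ (i : ℕ) (hi1 : 1 ≤ i) (hi : i < k) (A : Fin n),
        G ⟨i, hi⟩ A = pd n k Lhat ⟨i, by omega⟩ A (w.1, w.2.1) -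
          w.2.2 ⟨i - 1, by omega⟩ A)) := by
  have hLd : Differentiable ℝ Lhat := hL.differentiable (by simp)
  have hfq : (fun i => fq (qSlot i) - w.2.1 (qSlotSucc i)) = 0 ↔
      ∀ (i : ℕ) (hi : i < k) (A : Fin n), fq ⟨i, by omega⟩ A = w.2.1 ⟨i + 1, by omega⟩ A := by
    simp only [funext_iff, Pi.zero_apply, sub_eq_zero, Fin.forall_iff]
  rw [forall_OmegaR_eq_zero_iff_of_fst_eq_one hk Lhat rfl]
  simp only [OmegaR_one_zero_eq_sum_dotProduct hk hLd]
  rw [forall_sum_dotProduct_add_sum_dotProduct_eq_zero_iff,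
    pd_sub_extend_eq_zero_iff hk hLd hdep, hfq]
  exact ⟨fun ⟨⟨ha, hc, hd⟩, hb⟩ => ⟨ha, hb, hc, hd⟩, fun ⟨ha, hb, hc, hd⟩ => ⟨⟨ha, hc, hd⟩, hb⟩⟩
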